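/- Let f : S² × ℝ → S² × ℝ be a geodesic-preserving bijection. Then f preserves the classes of geodesics: the image under f of every horizontal geodesic is a horizontal geodesic, the image of every vertical geodesic is a vertical geodesic, and the image of every slant geodesic is a slant geodesic. -/

import Mathlib

open scoped RealInnerProductSpace

/-- Euclidean 3-space. -/
abbrev E3 : Type := EuclideanSpace ℝ (Fin 3)

/-- The unit sphere `S² ⊆ ℝ³`. -/
abbrev S2 : Type := Metric.sphere (0 : E3) 1

/-- A geodesic of `S² × ℝ`: a set of the form
`{(cos(α t) • u + sin(α t) • v, β t + c) | t ∈ ℝ}` where `u, v ∈ S²` are orthogonal,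
`c ∈ ℝ`, and `(α, β) ≠ (0, 0)`. -/
def IsSphGeodesic (G : Set (S2 × ℝ)) : Prop :=
  ∃ (u v : S2) (α β c : ℝ), ⟪(u : E3), (v : E3)⟫ = 0 ∧ (α, β) ≠ ((0 : ℝ), (0 : ℝ)) ∧
    G = {q : S2 × ℝ | ∃ t : ℝ,
      (q.1 : E3) = Real.cos (α * t) • (u : E3) + Real.sin (α * t) • (v : E3) ∧
      q.2 = β * t + c}

/-- A geodesic of `S² × ℝ` is horizontal if it is contained in `S² × {r}` for some `r`. -/
def IsHorizontalSphGeodesic (G : Set (S2 × ℝ)) : Prop :=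
  IsSphGeodesic G ∧ ∃ r : ℝ, G ⊆ {q : S2 × ℝ | q.2 = r}

/-- A geodesic of `S² × ℝ` is vertical if it equals `{p} × ℝ` for some `p ∈ S²`. -/
def IsVerticalSphGeodesic (G : Set (S2 × ℝ)) : Prop :=
  IsSphGeodesic G ∧ ∃ p : S2, G = {q : S2 × ℝ | q.1 = p}

/-- A geodesic of `S² × ℝ` is slant if it is neither horizontal nor vertical. -/
def IsSlantSphGeodesic (G : Set (S2 × ℝ)) : Prop :=
  IsSphGeodesic G ∧ ¬ IsHorizontalSphGeodesic G ∧ ¬ IsVerticalSphGeodesic G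


/-!
The antipodal map `σ (p, t) = (-p, t)` is determined by the geodesics. Two horizontal great
circles through `z` meet exactly in `{z, σ z}`. Conversely, two distinct common points of two
geodesics with finite intersection must be `x, σ x`: over equal or antipodal base points both
geodesics contain a common vertical ladder `(x.1, x.2 + 2 (y.2 - x.2) j)`, and otherwise both are
helices on the cylinder over one great circle, through the same point, and such helices meet
infinitely often. Hence `f ∘ σ = σ ∘ f`, and horizontal geodesics, being the geodesics that
contain some pair `{z, σ z}`, are preserved.

Two points over one base point lie on two distinct helices `G₁, G₂` with `G₁ ∩ σ G₂ = ∅`, which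
cannot happen for points over base points that are neither equal nor antipodal. So all points of
the image of a vertical line lie over some `{B, -B}`, and the image is vertical. Finally, a slant
geodesic contains two distinct points over one base point, so its image is not horizontal, and a
vertical image would make it equal to the vertical line through one of its points.
-/

open Real Set

section GreatCircle

variable {E : Type*} [NormedAddCommGroup E] [InnerProductSpace ℝ E]

structure IsOrthonormalPair (p w : E) : Prop where
  norm_left : ‖p‖ = 1
  norm_right : ‖w‖ = 1
  inner_eq_zero : ⟪p, w⟫ = 0

noncomputable def greatCircle (p w : E) (θ : ℝ) : E := cos θ • p + sin θ • w

@[simp]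
lemma greatCircle_zero (p w : E) : greatCircle p w 0 = p := by
  simp [greatCircle]

@[simp]
lemma greatCircle_pi_div_two (p w : E) : greatCircle p w (π / 2) = w := by
  simp [greatCircle]

lemma greatCircle_add_pi (p w : E) (θ : ℝ) :
    greatCircle p w (θ + π) = -greatCircle p w θ := by
  simp only [greatCircle, cos_add_pi, sin_add_pi, neg_smul, neg_add]

lemma greatCircle_add_int_mul_two_pi (p w : E) (θ : ℝ) (n : ℤ) :
    greatCircle p w (θ + n * (2 * π)) = greatCircle p w θ := by
  simp only [greatCircle, cos_add_int_mul_two_pi, sin_add_int_mul_two_pi]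

lemma greatCircle_neg_right (p w : E) (θ : ℝ) : greatCircle p (-w) θ = greatCircle p w (-θ) := by
  simp [greatCircle]

lemma greatCircle_greatCircle (p w : E) (a θ : ℝ) :
    greatCircle (greatCircle p w a) (greatCircle p w (a + π / 2)) θ = greatCircle p w (a + θ) := by
  simp only [greatCircle, cos_add_pi_div_two, sin_add_pi_div_two]
  simp only [cos_add, sin_add]
  module

lemma inner_greatCircle_left (p w u : E) (θ : ℝ) :
    ⟪greatCircle p w θ, u⟫ = cos θ * ⟪p, u⟫ + sin θ * ⟪w, u⟫ := by
  simp only [greatCircle, inner_add_left, real_inner_smul_left]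

namespace IsOrthonormalPair

variable {p w : E}

lemma inner_greatCircle_fst (h : IsOrthonormalPair p w) (θ : ℝ) :
    ⟪greatCircle p w θ, p⟫ = cos θ := by
  simp [inner_greatCircle_left, h.norm_left, real_inner_comm p w, h.inner_eq_zero]

lemma inner_greatCircle_snd (h : IsOrthonormalPair p w) (θ : ℝ) :
    ⟪greatCircle p w θ, w⟫ = sin θ := by
  simp [inner_greatCircle_left, h.norm_right, h.inner_eq_zero]

lemma inner_greatCircle_eq_zero {w' : E} (h : IsOrthonormalPair p w) (hw : ⟪w', w⟫ = 0)
    (θ : ℝ) : ⟪greatCircle p w' θ, w⟫ = 0 := by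
  simp [inner_greatCircle_left, h.inner_eq_zero, hw]

lemma inner_greatCircle_greatCircle (h : IsOrthonormalPair p w) (a b : ℝ) :
    ⟪greatCircle p w a, greatCircle p w b⟫ = cos (a - b) := by
  rw [real_inner_comm, inner_greatCircle_left, real_inner_comm _ p, real_inner_comm _ w,
    h.inner_greatCircle_fst, h.inner_greatCircle_snd, cos_sub]
  ring

lemma norm_greatCircle (h : IsOrthonormalPair p w) (θ : ℝ) : ‖greatCircle p w θ‖ = 1 := by
  have h1 := h.inner_greatCircle_greatCircle θ θ
  rw [sub_self, cos_zero, real_inner_self_eq_norm_sq] at h1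
  exact (pow_eq_one_iff_of_nonneg (norm_nonneg _) two_ne_zero).1 h1

lemma rotate (h : IsOrthonormalPair p w) (a : ℝ) :
    IsOrthonormalPair (greatCircle p w a) (greatCircle p w (a + π / 2)) :=
  ⟨h.norm_greatCircle a, h.norm_greatCircle _, by
    rw [h.inner_greatCircle_greatCircle, sub_add_cancel_left, cos_neg, cos_pi_div_two]⟩

lemma exists_eq_add_int_mul_pi (h : IsOrthonormalPair p w) {a b : ℝ}
    (he : greatCircle p w b = greatCircle p w a ∨ greatCircle p w b = -greatCircle p w a) :
    ∃ n : ℤ, b = a + n * π := by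
  have hsin : sin (b - a) = 0 := by
    rw [sin_sub, ← h.inner_greatCircle_fst b, ← h.inner_greatCircle_snd b,
      ← h.inner_greatCircle_fst a, ← h.inner_greatCircle_snd a]
    rcases he with he | he <;> simp only [he, inner_neg_left] <;> ring
  obtain ⟨n, hn⟩ := sin_eq_zero_iff.1 hsin
  exact ⟨n, by linarith⟩

lemma eq_or_eq_neg_of_greatCircle_eq {w' : E} (h : IsOrthonormalPair p w)
    (h' : IsOrthonormalPair p w') {a b : ℝ} (he : greatCircle p w a = greatCircle p w' b)
    (hp : greatCircle p w a ≠ p) (hn : greatCircle p w a ≠ -p) : w' = w ∨ w' = -w := by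
  have hcos : cos a = cos b := by
    rw [← h.inner_greatCircle_fst, he, h'.inner_greatCircle_fst]
  have hsin : sin a ≠ 0 := by
    intro hs
    obtain hc | hc : cos a = 1 ∨ cos a = -1 := sq_eq_one_iff.1 (by nlinarith [sin_sq_add_cos_sq a])
    · exact hp (by simp [greatCircle, hc, hs])
    · exact hn (by simp [greatCircle, hc, hs])
  have hsmul : sin a • w = sin b • w' := by
    simpa only [greatCircle, hcos, add_right_inj] using he
  rcases sq_eq_sq_iff_eq_or_eq_neg.1 (by rw [sin_sq, sin_sq, hcos] : sin b ^ 2 = sin a ^ 2)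
    with hb | hb
  · rw [hb] at hsmul
    exact Or.inl (smul_right_injective E hsin hsmul).symm
  · rw [hb, neg_smul, ← smul_neg] at hsmul
    exact Or.inr (by rw [smul_right_injective E hsin hsmul, neg_neg])

end IsOrthonormalPair

lemma exists_isOrthonormalPair_triple [FiniteDimensional ℝ E] (hE : Module.finrank ℝ E = 3)
    {p : E} (hp : ‖p‖ = 1) :
    ∃ w₁ w₂ : E, IsOrthonormalPair p w₁ ∧ IsOrthonormalPair p w₂ ∧ ⟪w₁, w₂⟫ = 0 := by
  obtain ⟨b, hb⟩ := Orthonormal.exists_orthonormalBasis_extension_of_card_eq (ι := Fin 3) (𝕜 := ℝ)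
    (by simp [hE]) (v := fun _ => p) (s := {0}) (by
      rw [orthonormal_iff_ite]
      rintro ⟨i, rfl⟩ ⟨j, rfl⟩
      simp [hp])
  have hb0 : b 0 = p := hb 0 rfl
  have hon := b.orthonormal
  exact ⟨b 1, b 2, ⟨hp, hon.1 1, hb0 ▸ hon.2 (by decide)⟩, ⟨hp, hon.1 2, hb0 ▸ hon.2 (by decide)⟩,
    hon.2 (by decide)⟩

end GreatCircle

section Helix

noncomputable def antipode (z : S2 × ℝ) : S2 × ℝ := (-z.1, z.2)

lemma antipode_ne (z : S2 × ℝ) : antipode z ≠ z :=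
  fun h => ne_neg_of_mem_unit_sphere ℝ z.1 (congrArg Prod.fst h).symm

def helix (p w : E3) (k c : ℝ) : Set (S2 × ℝ) :=
  {q | ∃ θ, (q.1 : E3) = greatCircle p w θ ∧ q.2 = k * θ + c}

variable {p w : E3} {k c : ℝ} {x y : S2 × ℝ}

noncomputable def helixPoint (h : IsOrthonormalPair p w) (k c θ : ℝ) : S2 × ℝ :=
  (⟨greatCircle p w θ, mem_sphere_zero_iff_norm.2 (h.norm_greatCircle θ)⟩, k * θ + c)

lemma helixPoint_mem (h : IsOrthonormalPair p w) (k c θ : ℝ) :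
    helixPoint h k c θ ∈ helix p w k c :=
  ⟨θ, rfl, rfl⟩

lemma helix_neg_right (p w : E3) (k c : ℝ) : helix p (-w) k c = helix p w (-k) c := by
  ext q
  constructor
  · rintro ⟨θ, h1, h2⟩
    exact ⟨-θ, by rw [h1, greatCircle_neg_right], by rw [h2]; ring⟩
  · rintro ⟨θ, h1, h2⟩
    exact ⟨-θ, by rw [h1, greatCircle_neg_right, neg_neg], by rw [h2]; ring⟩

lemma snd_eq_of_mem_helix_zero (hx : x ∈ helix p w 0 c) : x.2 = c := by
  obtain ⟨θ, -, h⟩ := hx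
  simpa using h

lemma eq_of_mem_helix_of_snd_eq (hk : k ≠ 0) (hx : x ∈ helix p w k c) (hy : y ∈ helix p w k c)
    (h2 : x.2 = y.2) : x = y := by
  obtain ⟨a, ha1, ha2⟩ := hx
  obtain ⟨b, hb1, hb2⟩ := hy
  have hab : a = b := mul_left_cancel₀ hk (by linarith)
  exact Prod.ext (Subtype.ext (by rw [ha1, hb1, hab])) h2

lemma mem_helix_add_period (hx : x ∈ helix p w k c) (n : ℤ) :
    (x.1, x.2 + k * (n * (2 * π))) ∈ helix p w k c := by
  obtain ⟨θ, h1, h2⟩ := hx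
  exact ⟨θ + n * (2 * π), by rw [h1, greatCircle_add_int_mul_two_pi], by rw [h2]; ring⟩

namespace IsOrthonormalPair

lemma exists_helix_eq_helix_of_mem (h : IsOrthonormalPair p w) (hx : x ∈ helix p w k c) :
    ∃ v, IsOrthonormalPair (x.1 : E3) v ∧ helix p w k c = helix x.1 v k x.2 := by
  obtain ⟨θ₀, h1, h2⟩ := hx
  refine ⟨greatCircle p w (θ₀ + π / 2), h1 ▸ h.rotate θ₀, ?_⟩
  rw [h1, h2]
  ext q
  constructor
  · rintro ⟨θ, hq1, hq2⟩
    exact ⟨θ - θ₀, by rw [hq1, greatCircle_greatCircle, add_sub_cancel], by rw [hq2]; ring⟩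
  · rintro ⟨θ, hq1, hq2⟩
    exact ⟨θ₀ + θ, by rw [hq1, greatCircle_greatCircle], by rw [hq2]; ring⟩

lemma exists_snd_eq_add_int_mul_pi (h : IsOrthonormalPair p w) (hx : x ∈ helix p w k c)
    (hy : y ∈ helix p w k c) (hxy : y.1 = x.1 ∨ y.1 = -x.1) :
    ∃ n : ℤ, y.2 = x.2 + k * (n * π) := by
  obtain ⟨a, ha1, ha2⟩ := hx
  obtain ⟨b, hb1, hb2⟩ := hy
  obtain ⟨n, hn⟩ := h.exists_eq_add_int_mul_pi (a := a) (b := b) (by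
    rw [← ha1, ← hb1]
    rcases hxy with e | e <;> simp [e])
  exact ⟨n, by rw [ha2, hb2, hn]; ring⟩

lemma helix_infinite (h : IsOrthonormalPair p w) (k c : ℝ) : (helix p w k c).Infinite := by
  have hinj : InjOn (helixPoint h k c) (Icc 0 π) := by
    intro a ha b hb hab
    apply injOn_cos ha hb
    rw [← h.inner_greatCircle_fst, ← h.inner_greatCircle_fst]
    exact congrArg (fun q : S2 × ℝ => ⟪(q.1 : E3), p⟫) hab
  refine ((Icc_infinite pi_pos).image hinj).mono ?_
  rintro _ ⟨θ, -, rfl⟩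
  exact helixPoint_mem h k c θ

lemma inter_helix_infinite (h : IsOrthonormalPair p w) {k₁ k₂ : ℝ} (hk₁ : k₁ ≠ 0)
    (hk₂ : k₂ ≠ 0) (hk : k₁ ≠ k₂) (c : ℝ) : (helix p w k₁ c ∩ helix p w k₂ c).Infinite := by
  have hk' : k₁ - k₂ ≠ 0 := sub_ne_zero.2 hk
  -- the `m`-th crossing: `k₁ θ = k₂ (θ + 2π m)`
  let θ : ℤ → ℝ := fun m => k₂ * (m * (2 * π)) / (k₁ - k₂)
  refine infinite_of_injective_forall_mem (f := fun m => helixPoint h k₁ c (θ m)) ?_ fun m => ?_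
  · intro m n hmn
    have h2 := congrArg Prod.snd hmn
    simp only [helixPoint, θ, add_left_inj] at h2
    field_simp at h2
    exact_mod_cast h2
  · refine ⟨helixPoint_mem h k₁ c (θ m), θ m + m * (2 * π), ?_, ?_⟩
    · simp [helixPoint, greatCircle_add_int_mul_two_pi]
    · simp only [helixPoint, θ]
      field_simp
      ring

lemma inter_helix_infinite_of_mem (h : IsOrthonormalPair p w) {k₁ k₂ : ℝ}
    (hx : x ∈ helix p w k₁ c ∩ helix p w k₂ c) (hy : y ∈ helix p w k₁ c ∩ helix p w k₂ c)
    (hxy : x ≠ y) : (helix p w k₁ c ∩ helix p w k₂ c).Infinite := by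
  rcases eq_or_ne k₁ k₂ with rfl | hk
  · rw [inter_self]
    exact h.helix_infinite k₁ c
  rcases eq_or_ne k₁ 0 with rfl | hk₁
  · exact absurd (eq_of_mem_helix_of_snd_eq hk.symm hx.2 hy.2
      ((snd_eq_of_mem_helix_zero hx.1).trans (snd_eq_of_mem_helix_zero hy.1).symm)) hxy
  rcases eq_or_ne k₂ 0 with rfl | hk₂
  · exact absurd (eq_of_mem_helix_of_snd_eq hk₁ hx.1 hy.1
      ((snd_eq_of_mem_helix_zero hx.2).trans (snd_eq_of_mem_helix_zero hy.2).symm)) hxy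
  exact h.inter_helix_infinite hk₁ hk₂ hk c

lemma inter_antipode_helix_nonempty (h : IsOrthonormalPair p w) {k₁ k₂ : ℝ} (hk : k₁ ≠ k₂)
    (c : ℝ) : (helix p w k₁ c ∩ antipode '' helix p w k₂ c).Nonempty := by
  have hk' : k₂ - k₁ ≠ 0 := sub_ne_zero.2 hk.symm
  set θ := k₁ * π / (k₂ - k₁)
  refine ⟨helixPoint h k₁ c (θ + π), helixPoint_mem h k₁ c _, helixPoint h k₂ c θ,
    helixPoint_mem h k₂ c θ, Prod.ext (Subtype.ext ?_) ?_⟩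
  · simp [antipode, helixPoint, greatCircle_add_pi]
  · simp only [antipode, helixPoint, θ]
    field_simp
    ring

end IsOrthonormalPair

end Helix

section Geodesic

variable {G H K : Set (S2 × ℝ)} {x y : S2 × ℝ}

lemma isSphGeodesic_iff :
    IsSphGeodesic G ↔ (∃ p w k c, IsOrthonormalPair p w ∧ G = helix p w k c) ∨
      ∃ p : S2, G = {q | q.1 = p} := by
  constructor
  · rintro ⟨u, v, α, β, c, huv, hαβ, rfl⟩
    by_cases hα : α = 0
    · have hβ : β ≠ 0 := by
        rintro rfl
        exact hαβ (by rw [hα])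
      refine Or.inr ⟨u, ?_⟩
      ext q
      simp only [hα, zero_mul, cos_zero, sin_zero, one_smul, zero_smul, add_zero,
        mem_ofPred_eq]
      constructor
      · rintro ⟨t, h1, -⟩
        exact Subtype.ext h1
      · intro hq
        exact ⟨(q.2 - c) / β, by rw [hq], by field_simp; ring⟩
    · refine Or.inl ⟨u, v, β / α, c, ⟨norm_eq_of_mem_sphere u, norm_eq_of_mem_sphere v, huv⟩, ?_⟩
      ext q
      constructor
      · rintro ⟨t, h1, h2⟩
        exact ⟨α * t, h1, by rw [h2]; field_simp⟩
      · rintro ⟨θ, h1, h2⟩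
        exact ⟨θ / α, by rwa [mul_div_cancel₀ _ hα], by rw [h2]; field_simp⟩
  · rintro (⟨p, w, k, c, h, rfl⟩ | ⟨p, rfl⟩)
    · refine ⟨⟨p, mem_sphere_zero_iff_norm.2 h.norm_left⟩,
        ⟨w, mem_sphere_zero_iff_norm.2 h.norm_right⟩, 1, k, c, h.inner_eq_zero, by simp, ?_⟩
      simp only [one_mul]
      rfl
    · obtain ⟨w, -, h, -, -⟩ :=
        exists_isOrthonormalPair_triple finrank_euclideanSpace_fin (norm_eq_of_mem_sphere p)
      refine ⟨p, ⟨w, mem_sphere_zero_iff_norm.2 h.norm_right⟩, 0, 1, 0, h.inner_eq_zero,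
        by simp, ?_⟩
      ext q
      simp only [zero_mul, cos_zero, sin_zero, one_smul, zero_smul, add_zero, one_mul,
        mem_ofPred_eq]
      exact ⟨fun hq => ⟨q.2, congrArg Subtype.val hq, rfl⟩, fun ⟨_, hq, _⟩ => Subtype.ext hq⟩

lemma isVerticalSphGeodesic_setOf_fst_eq (p : S2) : IsVerticalSphGeodesic {q | q.1 = p} :=
  ⟨isSphGeodesic_iff.2 (Or.inr ⟨p, rfl⟩), p, rfl⟩

namespace IsSphGeodesic

lemma mem_ladder (hG : IsSphGeodesic G) (hx : x ∈ G) (hy : y ∈ G)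
    (hxy : y.1 = x.1 ∨ y.1 = -x.1) (j : ℤ) : (x.1, x.2 + 2 * (y.2 - x.2) * j) ∈ G := by
  rcases isSphGeodesic_iff.1 hG with ⟨p, w, k, c, h, rfl⟩ | ⟨p, rfl⟩
  · obtain ⟨n, hn⟩ := h.exists_snd_eq_add_int_mul_pi hx hy hxy
    convert mem_helix_add_period hx (n * j) using 3
    rw [hn]
    push_cast
    ring
  · exact hx

lemma exists_common_frame (hG : IsSphGeodesic G) (hH : IsSphGeodesic H) (hxG : x ∈ G)
    (hxH : x ∈ H) (hyG : y ∈ G) (hyH : y ∈ H) (hxy : ¬(y.1 = x.1 ∨ y.1 = -x.1)) :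
    ∃ v k₁ k₂, IsOrthonormalPair (x.1 : E3) v ∧
      G = helix x.1 v k₁ x.2 ∧ H = helix x.1 v k₂ x.2 := by
  have rebase : ∀ K, IsSphGeodesic K → x ∈ K → y ∈ K →
      ∃ v k, IsOrthonormalPair (x.1 : E3) v ∧ K = helix x.1 v k x.2 := by
    intro K hK hx hy
    rcases isSphGeodesic_iff.1 hK with ⟨p, w, k, c, h, rfl⟩ | ⟨p, rfl⟩
    · obtain ⟨v, hv, e⟩ := h.exists_helix_eq_helix_of_mem hx
      exact ⟨v, k, hv, e⟩
    · exact absurd (Or.inl (hy.trans hx.symm)) hxy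
  obtain ⟨v, k₁, hv, rfl⟩ := rebase G hG hxG hyG
  obtain ⟨v', k₂, hv', rfl⟩ := rebase H hH hxH hyH
  obtain ⟨θ, hθ, -⟩ := hyG
  obtain ⟨θ', hθ', -⟩ := hyH
  rcases hv.eq_or_eq_neg_of_greatCircle_eq hv' (hθ.symm.trans hθ')
    (fun e => hxy (Or.inl (Subtype.ext (hθ.trans e))))
    (fun e => hxy (Or.inr (Subtype.ext (hθ.trans e)))) with rfl | rfl
  · exact ⟨v', k₁, k₂, hv, rfl, rfl⟩
  · exact ⟨v, k₁, -k₂, hv, rfl, helix_neg_right _ _ _ _⟩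

lemma eq_antipode_of_inter_finite (hG : IsSphGeodesic G) (hH : IsSphGeodesic H) (hxG : x ∈ G)
    (hxH : x ∈ H) (hyG : y ∈ G) (hyH : y ∈ H) (hxy : x ≠ y) (hfin : (G ∩ H).Finite) :
    y = antipode x := by
  by_cases hfst : y.1 = x.1 ∨ y.1 = -x.1
  · have hsnd : y.2 = x.2 := by
      by_contra hsnd
      have hΔ : 2 * (y.2 - x.2) ≠ 0 := mul_ne_zero two_ne_zero (sub_ne_zero.2 hsnd)
      refine infinite_of_injective_forall_mem
        (f := fun j : ℤ => (x.1, x.2 + 2 * (y.2 - x.2) * j)) (fun i j e => ?_)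
        (fun j => mem_inter (hG.mem_ladder hxG hyG hfst j) (hH.mem_ladder hxH hyH hfst j)) hfin
      have e2 := congrArg Prod.snd e
      simp only [add_right_inj, mul_eq_mul_left_iff, hΔ, or_false] at e2
      exact_mod_cast e2
    rcases hfst with h1 | h1
    · exact absurd (Prod.ext h1 hsnd).symm hxy
    · exact Prod.ext h1 hsnd
  · exfalso
    obtain ⟨v, k₁, k₂, hv, rfl, rfl⟩ := hG.exists_common_frame hH hxG hxH hyG hyH hfst
    exact hv.inter_helix_infinite_of_mem ⟨hxG, hxH⟩ ⟨hyG, hyH⟩ hxy hfin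

lemma inter_antipode_nonempty (hG : IsSphGeodesic G) (hH : IsSphGeodesic H) (hxG : x ∈ G)
    (hxH : x ∈ H) (hyG : y ∈ G) (hyH : y ∈ H) (hxy : ¬(y.1 = x.1 ∨ y.1 = -x.1))
    (hne : G ≠ H) : (G ∩ antipode '' H).Nonempty := by
  obtain ⟨v, k₁, k₂, hv, rfl, rfl⟩ := hG.exists_common_frame hH hxG hxH hyG hyH hxy
  exact hv.inter_antipode_helix_nonempty (fun hk => hne (by rw [hk])) x.2

lemma exists_eq_setOf_fst_eq (hK : IsSphGeodesic K) (B : S2)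
    (hB : ∀ q ∈ K, q.1 = B ∨ q.1 = -B) : ∃ p : S2, K = {q | q.1 = p} := by
  rcases isSphGeodesic_iff.1 hK with ⟨p, w, k, c, h, rfl⟩ | ⟨p, rfl⟩
  · exfalso
    have hp := hB _ (helixPoint_mem h k c 0)
    have hw := hB _ (helixPoint_mem h k c (π / 2))
    simp only [helixPoint, Subtype.ext_iff, greatCircle_zero, greatCircle_pi_div_two,
      coe_neg_sphere] at hp hw
    have h0 := h.inner_eq_zero
    rcases hp with rfl | rfl <;> rcases hw with rfl | rfl <;> simp at h0
  · exact ⟨p, rfl⟩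

lemma subset_setOf_snd_eq (hK : IsSphGeodesic K) (hy : y ∈ K) (hy' : antipode y ∈ K) :
    K ⊆ {q | q.2 = y.2} := by
  rcases isSphGeodesic_iff.1 hK with ⟨p, w, k, c, h, rfl⟩ | ⟨p, rfl⟩
  · rcases eq_or_ne k 0 with rfl | hk
    · intro q hq
      exact (snd_eq_of_mem_helix_zero hq).trans (snd_eq_of_mem_helix_zero hy).symm
    · exact absurd (eq_of_mem_helix_of_snd_eq hk hy' hy rfl) (antipode_ne y)
  · exact absurd (hy'.trans hy.symm) (ne_neg_of_mem_unit_sphere ℝ y.1).symm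

end IsSphGeodesic

lemma IsHorizontalSphGeodesic.exists_antipode_mem (hG : IsHorizontalSphGeodesic G) :
    ∃ z ∈ G, antipode z ∈ G := by
  obtain ⟨hG, r, hr⟩ := hG
  rcases isSphGeodesic_iff.1 hG with ⟨p, w, k, c, h, rfl⟩ | ⟨p, rfl⟩
  · have hk : k = 0 := by
      have h0 := hr (helixPoint_mem h k c 0)
      have h1 := hr (helixPoint_mem h k c 1)
      simp only [helixPoint, mem_ofPred_eq] at h0 h1
      linarith
    subst hk
    exact ⟨helixPoint h 0 c 0, helixPoint_mem h 0 c 0, π,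
      by simp [antipode, helixPoint, greatCircle], by simp [antipode, helixPoint]⟩
  · have h0 : (p, r + 1) ∈ {q : S2 × ℝ | q.1 = p} := rfl
    simpa using hr h0

lemma IsSlantSphGeodesic.exists_ne_of_fst_eq (hG : IsSlantSphGeodesic G) :
    ∃ x ∈ G, ∃ y ∈ G, x ≠ y ∧ x.1 = y.1 := by
  obtain ⟨hG, hh, hv⟩ := hG
  rcases isSphGeodesic_iff.1 hG with ⟨p, w, k, c, h, rfl⟩ | ⟨p, rfl⟩
  · rcases eq_or_ne k 0 with rfl | hk
    · exact absurd ⟨hG, c, fun q hq => snd_eq_of_mem_helix_zero hq⟩ hh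
    refine ⟨_, helixPoint_mem h k c 0, _, mem_helix_add_period (helixPoint_mem h k c 0) 1,
      fun e => ?_, rfl⟩
    have e2 := congrArg Prod.snd e
    simp [helixPoint, hk, pi_ne_zero] at e2
  · exact absurd ⟨hG, p, rfl⟩ hv

end Geodesic

section Witnesses

lemma IsOrthonormalPair.isSphGeodesic_helix {p w : E3} (h : IsOrthonormalPair p w) (k c : ℝ) :
    IsSphGeodesic (helix p w k c) :=
  isSphGeodesic_iff.2 (Or.inl ⟨p, w, k, c, h, rfl⟩)

lemma exists_isSphGeodesic_inter_eq_pair (z : S2 × ℝ) :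
    ∃ H₁ H₂, IsSphGeodesic H₁ ∧ IsSphGeodesic H₂ ∧ H₁ ∩ H₂ = {z, antipode z} := by
  obtain ⟨w₁, w₂, h₁, h₂, hw⟩ :=
    exists_isOrthonormalPair_triple finrank_euclideanSpace_fin (norm_eq_of_mem_sphere z.1)
  have hmem : ∀ w, z ∈ helix z.1 w 0 z.2 ∧ antipode z ∈ helix z.1 w 0 z.2 := fun w =>
    ⟨⟨0, by simp, by simp⟩, ⟨π, by simp [antipode, greatCircle], by simp [antipode]⟩⟩
  refine ⟨_, _, h₁.isSphGeodesic_helix 0 z.2, h₂.isSphGeodesic_helix 0 z.2, ?_⟩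
  ext q
  constructor
  · rintro ⟨⟨θ, hq1, hq2⟩, ⟨θ', hq1', -⟩⟩
    have hsin : sin θ = 0 := by
      have e := congrArg (⟪·, w₁⟫) (hq1.symm.trans hq1')
      rwa [h₁.inner_greatCircle_snd, h₁.inner_greatCircle_eq_zero (by rwa [real_inner_comm])] at e
    have hsnd : q.2 = z.2 := by simpa using hq2
    obtain hc | hc : cos θ = 1 ∨ cos θ = -1 := sq_eq_one_iff.1 (by nlinarith [sin_sq_add_cos_sq θ])
    · exact Or.inl (Prod.ext (Subtype.ext (by simp [hq1, greatCircle, hsin, hc])) hsnd)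
    · exact Or.inr (Prod.ext (Subtype.ext (by simp [antipode, hq1, greatCircle, hsin, hc])) hsnd)
  · rintro (rfl | rfl)
    · exact ⟨(hmem w₁).1, (hmem w₂).1⟩
    · exact ⟨(hmem w₁).2, (hmem w₂).2⟩

lemma exists_isSphGeodesic_inter_antipode_eq_empty {x y : S2 × ℝ} (hfst : x.1 = y.1)
    (hsnd : x.2 ≠ y.2) :
    ∃ G₁ G₂, IsSphGeodesic G₁ ∧ IsSphGeodesic G₂ ∧ G₁ ≠ G₂ ∧ x ∈ G₁ ∩ G₂ ∧ y ∈ G₁ ∩ G₂ ∧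
      G₁ ∩ antipode '' G₂ = ∅ := by
  obtain ⟨w₁, w₂, h₁, h₂, hw⟩ :=
    exists_isOrthonormalPair_triple finrank_euclideanSpace_fin (norm_eq_of_mem_sphere x.1)
  have hw' : ⟪w₂, w₁⟫ = 0 := by rwa [real_inner_comm]
  -- slope making one full turn from height `x.2` to height `y.2`
  set s := (y.2 - x.2) / (2 * π)
  have hs : s ≠ 0 := div_ne_zero (sub_ne_zero.2 hsnd.symm) (by positivity)
  have hmem : ∀ w, x ∈ helix x.1 w s x.2 ∧ y ∈ helix x.1 w s x.2 := fun w =>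
    ⟨⟨0, by simp, by simp⟩, ⟨2 * π,
      by simpa [hfst] using (greatCircle_add_int_mul_two_pi _ w 0 1).symm,
      by simp only [s]; field_simp; ring⟩⟩
  refine ⟨_, _, h₁.isSphGeodesic_helix s x.2, h₂.isSphGeodesic_helix s x.2, fun e => ?_,
    ⟨(hmem w₁).1, (hmem w₂).1⟩, ⟨(hmem w₁).2, (hmem w₂).2⟩, ?_⟩
  · obtain ⟨θ, hθ, -⟩ := e ▸ helixPoint_mem h₁ s x.2 (π / 2)
    have e := congrArg (⟪·, w₁⟫) hθ
    simp only [helixPoint, greatCircle_pi_div_two, h₁.inner_greatCircle_eq_zero hw'] at e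
    simp [h₁.norm_right] at e
  · rw [eq_empty_iff_forall_notMem]
    rintro _ ⟨⟨θ, hq1, hq2⟩, q, ⟨θ', hq1', hq2'⟩, rfl⟩
    simp only [antipode, coe_neg_sphere] at hq1 hq2
    rw [hq1', show θ' = θ from mul_left_cancel₀ hs (by linarith)] at hq1
    have hcos := congrArg (⟪·, (x.1 : E3)⟫) hq1
    have hsin := congrArg (⟪·, w₁⟫) hq1
    simp only [inner_neg_left, h₁.inner_greatCircle_fst, h₂.inner_greatCircle_fst,
      h₁.inner_greatCircle_snd, h₁.inner_greatCircle_eq_zero hw'] at hcos hsin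
    nlinarith [sin_sq_add_cos_sq θ]

end Witnesses

section GeodesicPreserving

variable {f : S2 × ℝ → S2 × ℝ} {G : Set (S2 × ℝ)}

lemma map_antipode (hf : Function.Injective f)
    (hgeo : ∀ G : Set (S2 × ℝ), IsSphGeodesic G → IsSphGeodesic (f '' G)) (z : S2 × ℝ) :
    f (antipode z) = antipode (f z) := by
  obtain ⟨H₁, H₂, h₁, h₂, hinter⟩ := exists_isSphGeodesic_inter_eq_pair z
  have himage : f '' H₁ ∩ f '' H₂ = {f z, f (antipode z)} := by
    rw [← image_inter hf, hinter, image_pair]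
  have hz : f z ∈ f '' H₁ ∩ f '' H₂ := himage ▸ mem_insert _ _
  have hz' : f (antipode z) ∈ f '' H₁ ∩ f '' H₂ := himage ▸ mem_insert_of_mem _ rfl
  exact (hgeo _ h₁).eq_antipode_of_inter_finite (hgeo _ h₂) hz.1 hz.2 hz'.1 hz'.2
    (hf.ne (antipode_ne z).symm) (himage ▸ toFinite _)

lemma IsHorizontalSphGeodesic.image (hf : Function.Injective f)
    (hgeo : ∀ G : Set (S2 × ℝ), IsSphGeodesic G → IsSphGeodesic (f '' G))
    (hG : IsHorizontalSphGeodesic G) : IsHorizontalSphGeodesic (f '' G) := by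
  obtain ⟨z, hz, hz'⟩ := hG.exists_antipode_mem
  refine ⟨hgeo _ hG.1, (f z).2, (hgeo _ hG.1).subset_setOf_snd_eq (mem_image_of_mem f hz) ?_⟩
  rw [← map_antipode hf hgeo]
  exact mem_image_of_mem f hz'

lemma IsVerticalSphGeodesic.image (hf : Function.Injective f)
    (hgeo : ∀ G : Set (S2 × ℝ), IsSphGeodesic G → IsSphGeodesic (f '' G))
    (hG : IsVerticalSphGeodesic G) : IsVerticalSphGeodesic (f '' G) := by
  obtain ⟨hG, p, rfl⟩ := hG
  refine ⟨hgeo _ hG, (hgeo _ hG).exists_eq_setOf_fst_eq (f (p, 0)).1 ?_⟩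
  rintro _ ⟨z, hz, rfl⟩
  by_contra hfst
  have hsnd : (0 : ℝ) ≠ z.2 := fun h =>
    hfst (Or.inl (by rw [show z = (p, 0) from Prod.ext hz h.symm]))
  obtain ⟨G₁, G₂, hG₁, hG₂, hne, hxG, hzG, hempty⟩ :=
    exists_isSphGeodesic_inter_antipode_eq_empty (x := (p, 0)) hz.symm hsnd
  obtain ⟨q, hq⟩ := (hgeo _ hG₁).inter_antipode_nonempty (hgeo _ hG₂)
    (mem_image_of_mem f hxG.1) (mem_image_of_mem f hxG.2) (mem_image_of_mem f hzG.1)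
    (mem_image_of_mem f hzG.2) hfst
    (fun e => hne (image_injective.2 hf e))
  have hcomm : antipode '' (f '' G₂) = f '' (antipode '' G₂) := by
    simp only [image_image, map_antipode hf hgeo]
  rw [hcomm, ← image_inter hf, hempty, image_empty] at hq
  exact hq

lemma IsSlantSphGeodesic.image (hf : Function.Injective f)
    (hgeo : ∀ G : Set (S2 × ℝ), IsSphGeodesic G → IsSphGeodesic (f '' G))
    (hG : IsSlantSphGeodesic G) : IsSlantSphGeodesic (f '' G) := by
  obtain ⟨x, hx, y, hy, hxy, hfst⟩ := hG.exists_ne_of_fst_eq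
  obtain ⟨-, p, hp⟩ := (isVerticalSphGeodesic_setOf_fst_eq x.1).image hf hgeo
  have hV : ∀ z : S2 × ℝ, z.1 = x.1 → (f z).1 = p := fun z hz => by
    have : f z ∈ f '' {q | q.1 = x.1} := mem_image_of_mem f hz
    rwa [hp] at this
  refine ⟨hgeo _ hG.1, fun ⟨_, r, hr⟩ => hxy (hf (Prod.ext ?_ ?_)), fun ⟨_, p', hp'⟩ => ?_⟩
  · rw [hV x rfl, hV y hfst.symm]
  · rw [hr (mem_image_of_mem f hx), hr (mem_image_of_mem f hy)]
  · have hpp : p' = p := by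
      have : f x ∈ f '' G := mem_image_of_mem f hx
      rw [hp'] at this
      exact this.symm.trans (hV x rfl)
    exact hG.2.2 ⟨hG.1, x.1, image_injective.2 hf (hp'.trans (hpp ▸ hp.symm))⟩

end GeodesicPreserving

theorem sphere_times_real_geodesic_classes_preserved
    (f : S2 × ℝ → S2 × ℝ)
    (hbij : Function.Bijective f)
    (hgeo : ∀ G : Set (S2 × ℝ), IsSphGeodesic G → IsSphGeodesic (f '' G)) :
    (∀ G : Set (S2 × ℝ), IsHorizontalSphGeodesic G → IsHorizontalSphGeodesic (f '' G)) ∧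
    (∀ G : Set (S2 × ℝ), IsVerticalSphGeodesic G → IsVerticalSphGeodesic (f '' G)) ∧
    (∀ G : Set (S2 × ℝ), IsSlantSphGeodesic G → IsSlantSphGeodesic (f '' G)) :=
  ⟨fun _ hG => hG.image hbij.injective hgeo, fun _ hG => hG.image hbij.injective hgeo,
    fun _ hG => hG.image hbij.injective hgeo⟩
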